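/- arXiv:1211.2265 — 4 statements merged into one kernel-verified Lean document; each statement's English description precedes it below -/
import Mathlib

section
/- For all t ≥ 0, one has (√2 − 1)² · min(t, t²) ≤ (√(1+t) − 1)² ≤ min(t, t²). -/
/-!
Put `s = √(1 + t) ≥ 1`, so that `t = (s - 1)(s + 1)`. Then `(s - 1)² ≤ (s - 1)(s + 1) = t`, and
`s - 1 ≤ 2(s - 1) ≤ t` gives `(s - 1)² ≤ t²`. For `t ≤ 1` one has `s ≤ √2`, hence
`s - 1 = t / (s + 1) ≥ t / (√2 + 1) = (√2 - 1) t`. For `t ≥ 1` one has `s ≥ √2`, and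
`(s - 1)² / t = (s - 1) / (s + 1)` is increasing in `s`, so it is at least its value
`(√2 - 1) / (√2 + 1) = (√2 - 1)²` at `s = √2`.
-/

namespace Real

lemma sqrt_two_sub_one_nonneg : 0 ≤ √2 - 1 :=
  sub_nonneg.2 (one_le_sqrt.2 one_le_two)

variable {t : ℝ}

lemma one_le_sqrt_one_add (ht : 0 ≤ t) : 1 ≤ √(1 + t) :=
  one_le_sqrt.2 (by linarith)

lemma sqrt_one_add_sub_one_mul_add_one (ht : 0 ≤ t) :
    (√(1 + t) - 1) * (√(1 + t) + 1) = t := by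
  have hs : √(1 + t) ^ 2 = 1 + t := sq_sqrt (by linarith)
  linear_combination hs

lemma sqrt_one_add_sub_one_le_self (ht : 0 ≤ t) : √(1 + t) - 1 ≤ t := by
  have hs := one_le_sqrt_one_add ht
  nlinarith [sqrt_one_add_sub_one_mul_add_one ht]

lemma sq_sqrt_one_add_sub_one_le_self (ht : 0 ≤ t) : (√(1 + t) - 1) ^ 2 ≤ t := by
  have hs := one_le_sqrt_one_add ht
  nlinarith [sqrt_one_add_sub_one_mul_add_one ht]

lemma sq_sqrt_one_add_sub_one_le_sq (ht : 0 ≤ t) : (√(1 + t) - 1) ^ 2 ≤ t ^ 2 :=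
  pow_le_pow_left₀ (sub_nonneg.2 (one_le_sqrt_one_add ht)) (sqrt_one_add_sub_one_le_self ht) 2

lemma sq_sqrt_one_add_sub_one_le_min (ht : 0 ≤ t) :
    (√(1 + t) - 1) ^ 2 ≤ min t (t ^ 2) :=
  le_min (sq_sqrt_one_add_sub_one_le_self ht) (sq_sqrt_one_add_sub_one_le_sq ht)

lemma sqrt_two_sub_one_mul_le_sqrt_one_add_sub_one (ht : 0 ≤ t) (ht₁ : t ≤ 1) :
    (√2 - 1) * t ≤ √(1 + t) - 1 := by
  have hs : √(1 + t) ≤ √2 := sqrt_le_sqrt (by linarith)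
  have h2 : (√2 - 1) * (√2 + 1) = 1 := by
    linear_combination sq_sqrt (zero_le_two : (0 : ℝ) ≤ 2)
  have hs₁ := one_le_sqrt_one_add ht
  calc (√2 - 1) * t = (√2 - 1) * (√(1 + t) + 1) * (√(1 + t) - 1) := by
        conv_lhs => rw [← sqrt_one_add_sub_one_mul_add_one ht]
        ring
    _ ≤ (√2 - 1) * (√2 + 1) * (√(1 + t) - 1) := by
        gcongr
        exact sqrt_two_sub_one_nonneg
    _ = √(1 + t) - 1 := by rw [h2, one_mul]

lemma sqrt_two_sub_one_sq_mul_le_sq_sqrt_one_add_sub_one (ht : 1 ≤ t) :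
    (√2 - 1) ^ 2 * t ≤ (√(1 + t) - 1) ^ 2 := by
  have ht₀ : 0 ≤ t := zero_le_one.trans ht
  set s := √(1 + t)
  have hs : √2 ≤ s := sqrt_le_sqrt (by linarith)
  have h2 : √2 ^ 2 = 2 := sq_sqrt zero_le_two
  have hst : (s - 1) * (s + 1) = t := sqrt_one_add_sub_one_mul_add_one ht₀
  -- `(s - 1) - (√2 - 1)² (s + 1) = 2 (√2 - 1) (s - √2)`
  have key : (√2 - 1) ^ 2 * (s + 1) ≤ s - 1 := by
    nlinarith [mul_nonneg sqrt_two_sub_one_nonneg (sub_nonneg.2 hs)]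
  have hs₁ : 0 < s + 1 := by positivity
  refine le_of_mul_le_mul_right ?_ hs₁
  calc (√2 - 1) ^ 2 * t * (s + 1) = t * ((√2 - 1) ^ 2 * (s + 1)) := by ring
    _ ≤ t * (s - 1) := by gcongr
    _ = (s - 1) ^ 2 * (s + 1) := by rw [← hst]; ring

end Real

/-- For all `t ≥ 0`,
`(√2 − 1)² · min(t, t²) ≤ (√(1+t) − 1)² ≤ min(t, t²)`. -/
theorem stmt1 (t : ℝ) (ht : 0 ≤ t) :
    (Real.sqrt 2 - 1) ^ 2 * min t (t ^ 2) ≤ (Real.sqrt (1 + t) - 1) ^ 2 ∧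
    (Real.sqrt (1 + t) - 1) ^ 2 ≤ min t (t ^ 2) := by
  refine ⟨?_, Real.sq_sqrt_one_add_sub_one_le_min ht⟩
  rcases le_total t 1 with ht₁ | ht₁
  · rw [min_eq_right (by nlinarith), ← mul_pow]
    exact pow_le_pow_left₀ (mul_nonneg Real.sqrt_two_sub_one_nonneg ht)
      (Real.sqrt_two_sub_one_mul_le_sqrt_one_add_sub_one ht ht₁) 2
  · rw [min_eq_left (by nlinarith)]
    exact Real.sqrt_two_sub_one_sq_mul_le_sq_sqrt_one_add_sub_one ht₁
end

section
/- Let P, Q₀, Q₁ be probability measures with Q₁ mutually singular with respect to P, and let 0 ≤ ε ≤ 1. Then H²(P, (1−ε)Q₀ + εQ₁) = 2(1 − √(1−ε)) + √(1−ε) · H²(P, Q₀). -/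
open MeasureTheory

/-- The squared Hellinger distance `H²(P,Q)`, computed with the dominating measure `P + Q`. -/
noncomputable def sqHellinger {α : Type*} [MeasurableSpace α] (P Q : Measure α) : ℝ :=
  ∫ x, (Real.sqrt ((Measure.rnDeriv P (P + Q)) x).toReal
      - Real.sqrt ((Measure.rnDeriv Q (P + Q)) x).toReal) ^ 2 ∂(P + Q)

/-! Writing `p, q₀, q₁` for densities with respect to a common dominating measure, singularity
gives `p q₁ = 0` almost everywhere, so the affinity `∫ √p √q` of `P` with the mixture
`(1-ε)Q₀ + εQ₁` is `√(1-ε)` times the affinity of `P` with `Q₀`. Since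
`H²(P,Q) = P(α) + Q(α) - 2 ∫ √p √q` for every dominating measure, the identity follows. -/

open scoped ENNReal

namespace MeasureTheory.Measure

variable {α : Type*} [MeasurableSpace α] {μ ν κ : Measure α}

lemma ae_rnDeriv_eq_zero_of_measure_eq_zero {s : Set α} (hs : MeasurableSet s) (hμs : μ s = 0) :
    ∀ᵐ x ∂ν, x ∈ s → μ.rnDeriv ν x = 0 := by
  have h : ∫⁻ x in s, μ.rnDeriv ν x ∂ν = 0 :=
    nonpos_iff_eq_zero.mp (hμs ▸ setLIntegral_rnDeriv_le s)
  rw [lintegral_eq_zero_iff (measurable_rnDeriv μ ν)] at h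
  exact (ae_restrict_iff' hs).mp h

lemma MutuallySingular.rnDeriv_mul_rnDeriv_ae_eq_zero (h : μ ⟂ₘ ν) :
    μ.rnDeriv κ * ν.rnDeriv κ =ᵐ[κ] 0 := by
  obtain ⟨s, hs, hμs, hνs⟩ := h
  filter_upwards [ae_rnDeriv_eq_zero_of_measure_eq_zero hs hμs,
    ae_rnDeriv_eq_zero_of_measure_eq_zero hs.compl hνs] with x hμx hνx
  by_cases hx : x ∈ s
  · simp [hμx hx]
  · simp [hνx hx]

end MeasureTheory.Measure

lemma MeasureTheory.Integrable.sqrt_mul_sqrt {α : Type*} [MeasurableSpace α] {μ : Measure α}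
    {f g : α → ℝ} (hf : Integrable f μ) (hg : Integrable g μ) (hf0 : 0 ≤ f) (hg0 : 0 ≤ g) :
    Integrable (fun x ↦ √(f x) * √(g x)) μ := by
  refine (hf.add hg).mono ((Real.continuous_sqrt.comp_aestronglyMeasurable hf.1).mul
    (Real.continuous_sqrt.comp_aestronglyMeasurable hg.1)) (.of_forall fun x ↦ ?_)
  have := two_mul_le_add_sq √(f x) √(g x)
  rw [Real.sq_sqrt (hf0 x), Real.sq_sqrt (hg0 x)] at this
  rw [Pi.add_apply, Real.norm_of_nonneg (by positivity),
    Real.norm_of_nonneg (add_nonneg (hf0 x) (hg0 x))]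
  nlinarith [Real.sqrt_nonneg (f x), Real.sqrt_nonneg (g x)]

section Hellinger

variable {α : Type*} [MeasurableSpace α] {P Q Q₀ Q₁ ν : Measure α}

lemma sqHellinger_eq_integral_of_absolutelyContinuous [IsFiniteMeasure P] [IsFiniteMeasure Q]
    [SigmaFinite ν] (hP : P ≪ ν) (hQ : Q ≪ ν) :
    sqHellinger P Q = ∫ x, (√(P.rnDeriv ν x).toReal - √(Q.rnDeriv ν x).toReal) ^ 2 ∂ν := by
  have hP' : P ≪ P + Q := Measure.AbsolutelyContinuous.rfl.add_right Q
  have hQ' : Q ≪ P + Q := Measure.absolutelyContinuous_of_le (Measure.le_add_left le_rfl)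
  rw [sqHellinger, ← integral_rnDeriv_smul (hP.add_left hQ)]
  refine integral_congr_ae ?_
  filter_upwards [Measure.rnDeriv_mul_rnDeriv (κ := ν) hP',
    Measure.rnDeriv_mul_rnDeriv (κ := ν) hQ'] with x hPx hQx
  -- the integrand is homogeneous of degree one in the pair of densities
  rw [smul_eq_mul, ← hPx, ← hQx, Pi.mul_apply, Pi.mul_apply, ENNReal.toReal_mul,
    ENNReal.toReal_mul, Real.sqrt_mul ENNReal.toReal_nonneg, Real.sqrt_mul ENNReal.toReal_nonneg,
    ← sub_mul, mul_pow, Real.sq_sqrt ENNReal.toReal_nonneg, mul_comm]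

lemma sqHellinger_eq_sub_integral_sqrt_mul_sqrt [IsFiniteMeasure P] [IsFiniteMeasure Q]
    [SigmaFinite ν] (hP : P ≪ ν) (hQ : Q ≪ ν) :
    sqHellinger P Q = P.real Set.univ + Q.real Set.univ
      - 2 * ∫ x, √(P.rnDeriv ν x).toReal * √(Q.rnDeriv ν x).toReal ∂ν := by
  have hp : Integrable (fun x ↦ (P.rnDeriv ν x).toReal) ν := Measure.integrable_toReal_rnDeriv
  have hq : Integrable (fun x ↦ (Q.rnDeriv ν x).toReal) ν := Measure.integrable_toReal_rnDeriv
  have hpq := hp.sqrt_mul_sqrt hq (fun _ ↦ ENNReal.toReal_nonneg) (fun _ ↦ ENNReal.toReal_nonneg)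
  have hsq : ∀ x, (√(P.rnDeriv ν x).toReal - √(Q.rnDeriv ν x).toReal) ^ 2
      = (P.rnDeriv ν x).toReal + (Q.rnDeriv ν x).toReal
        - 2 * (√(P.rnDeriv ν x).toReal * √(Q.rnDeriv ν x).toReal) := fun x ↦ by
    rw [sub_sq, Real.sq_sqrt ENNReal.toReal_nonneg, Real.sq_sqrt ENNReal.toReal_nonneg]
    ring
  simp_rw [sqHellinger_eq_integral_of_absolutelyContinuous hP hQ, hsq]
  rw [integral_sub (f := fun x ↦ _ + _) (hp.add hq) (hpq.const_mul 2), integral_add hp hq,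
    integral_const_mul, Measure.integral_toReal_rnDeriv hP, Measure.integral_toReal_rnDeriv hQ]

lemma sqrt_rnDeriv_mul_sqrt_rnDeriv_smul_add_smul_ae_eq [IsFiniteMeasure Q₀] [IsFiniteMeasure Q₁]
    [SigmaFinite ν] (hsing : Q₁ ⟂ₘ P) {c d : ℝ≥0∞} (hc : c ≠ ∞) (hd : d ≠ ∞) :
    (fun x ↦ √(P.rnDeriv ν x).toReal * √((c • Q₀ + d • Q₁).rnDeriv ν x).toReal)
      =ᵐ[ν] fun x ↦ √c.toReal * (√(P.rnDeriv ν x).toReal * √(Q₀.rnDeriv ν x).toReal) := by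
  have := Q₀.smul_finite hc
  have := Q₁.smul_finite hd
  filter_upwards [Measure.rnDeriv_add (c • Q₀) (d • Q₁) ν,
    Measure.rnDeriv_smul_left_of_ne_top Q₀ ν hc, Measure.rnDeriv_smul_left_of_ne_top Q₁ ν hd,
    hsing.rnDeriv_mul_rnDeriv_ae_eq_zero (κ := ν)] with x hadd hQ₀x hQ₁x hprod
  rw [hadd, Pi.add_apply, hQ₀x, hQ₁x]
  rcases mul_eq_zero.mp hprod with hQ₁x | hPx
  · simp [hQ₁x, ENNReal.toReal_mul, Real.sqrt_mul ENNReal.toReal_nonneg]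
    ring
  · simp [hPx]

theorem sqHellinger_smul_add_smul_of_mutuallySingular [IsFiniteMeasure P] [IsFiniteMeasure Q₀]
    [IsFiniteMeasure Q₁] (hsing : Q₁ ⟂ₘ P) {c d : ℝ≥0∞} (hc : c ≠ ∞) (hd : d ≠ ∞) :
    sqHellinger P (c • Q₀ + d • Q₁) = P.real Set.univ + c.toReal * Q₀.real Set.univ
      + d.toReal * Q₁.real Set.univ
      - √c.toReal * (P.real Set.univ + Q₀.real Set.univ - sqHellinger P Q₀) := by
  have := Q₀.smul_finite hc
  have := Q₁.smul_finite hd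
  set ν := P + Q₀ + Q₁
  have hP : P ≪ ν := Measure.absolutelyContinuous_of_le
    ((Measure.le_add_right le_rfl).trans (Measure.le_add_right le_rfl))
  have hQ₀ : Q₀ ≪ ν := Measure.absolutelyContinuous_of_le
    ((Measure.le_add_left le_rfl).trans (Measure.le_add_right le_rfl))
  have hQ₁ : Q₁ ≪ ν := Measure.absolutelyContinuous_of_le (Measure.le_add_left le_rfl)
  have hQ : c • Q₀ + d • Q₁ ≪ ν := (Measure.smul_absolutelyContinuous.trans hQ₀).add_left
    (Measure.smul_absolutelyContinuous.trans hQ₁)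
  rw [sqHellinger_eq_sub_integral_sqrt_mul_sqrt hP hQ,
    integral_congr_ae (sqrt_rnDeriv_mul_sqrt_rnDeriv_smul_add_smul_ae_eq hsing hc hd),
    integral_const_mul, sqHellinger_eq_sub_integral_sqrt_mul_sqrt hP hQ₀, measureReal_add_apply,
    measureReal_ennreal_smul_apply, measureReal_ennreal_smul_apply]
  ring

end Hellinger

/-- If `Q₁ ⟂ P` and `0 ≤ ε ≤ 1`, then
`H²(P, (1−ε)Q₀ + εQ₁) = 2(1 − √(1−ε)) + √(1−ε)·H²(P, Q₀)`. -/
theorem stmt6 {α : Type*} [MeasurableSpace α] (P Q₀ Q₁ : Measure α)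
    [IsProbabilityMeasure P] [IsProbabilityMeasure Q₀] [IsProbabilityMeasure Q₁]
    (hsing : Q₁ ⟂ₘ P) (ε : ℝ) (hε0 : 0 ≤ ε) (hε1 : ε ≤ 1) :
    sqHellinger P (ENNReal.ofReal (1 - ε) • Q₀ + ENNReal.ofReal ε • Q₁)
      = 2 * (1 - Real.sqrt (1 - ε)) + Real.sqrt (1 - ε) * sqHellinger P Q₀ := by
  rw [sqHellinger_smul_add_smul_of_mutuallySingular hsing ENNReal.ofReal_ne_top
    ENNReal.ofReal_ne_top, ENNReal.toReal_ofReal (by linarith), ENNReal.toReal_ofReal hε0]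
  simp only [probReal_univ]
  ring
end

section
/- Let P, Q₀, Q₁ be probability measures with Q₁ ⟂ P and 0 ≤ ε ≤ 1. Then (1/4)·max(ε, H²(P,Q₀)) ≤ H²(P, (1−ε)Q₀ + εQ₁) ≤ 4·max(ε, H²(P,Q₀)). -/
/-!
For probability measures `H²(P, Q) = 2 − 2 A(P, Q)`, where `A(P, Q) = ∫ √(dP/dμ · dQ/dμ) dμ` is
the Hellinger affinity, which does not depend on the dominating measure `μ`. Computing everything
against `μ = P + Q₀ + Q₁`, the singular component `εQ₁` contributes nothing to the affinity with
`P`, so `A(P, (1−ε)Q₀ + εQ₁) = √(1−ε) A(P, Q₀)`, i.e.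
`H²(P, (1−ε)Q₀ + εQ₁) = 2(1 − √(1−ε)) + √(1−ε) H²(P, Q₀)`.
Both bounds follow from this identity, `ε/2 ≤ 1 − √(1−ε) ≤ ε` and `0 ≤ H²(P, Q₀) ≤ 2`.
-/

open MeasureTheory

namespace MeasureTheory.Measure

variable {α : Type*} [MeasurableSpace α]

lemma MutuallySingular.ae_rnDeriv_eq_zero_or_rnDeriv_eq_zero {P Q : Measure α} (h : P ⟂ₘ Q)
    (μ : Measure α) : ∀ᵐ x ∂μ, P.rnDeriv μ x = 0 ∨ Q.rnDeriv μ x = 0 := by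
  obtain ⟨S, hS, hPS, hQS⟩ := h
  have rnDeriv_ae_zero_on_null : ∀ (R : Measure α) (T : Set α), R T = 0 →
      ∀ᵐ x ∂μ.restrict T, R.rnDeriv μ x = 0 := fun R T hRT =>
    (lintegral_eq_zero_iff (measurable_rnDeriv R μ)).1
      (nonpos_iff_eq_zero.1 (hRT ▸ setLIntegral_rnDeriv_le T))
  filter_upwards [(ae_restrict_iff' hS).1 (rnDeriv_ae_zero_on_null P S hPS),
    (ae_restrict_iff' hS.compl).1 (rnDeriv_ae_zero_on_null Q Sᶜ hQS)] with x hP hQ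
  by_cases hx : x ∈ S
  · exact .inl (hP hx)
  · exact .inr (hQ hx)

end MeasureTheory.Measure

namespace MeasureTheory

variable {α : Type*} [MeasurableSpace α]

noncomputable def hellingerAffinity (P Q μ : Measure α) : ℝ :=
  ∫ x, √((P.rnDeriv μ x).toReal * (Q.rnDeriv μ x).toReal) ∂μ

lemma hellingerAffinity_nonneg (P Q μ : Measure α) : 0 ≤ hellingerAffinity P Q μ :=
  integral_nonneg fun _ => Real.sqrt_nonneg _

lemma integrable_sqrt_mul_rnDeriv (P Q μ : Measure α) [IsFiniteMeasure P] [IsFiniteMeasure Q] :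
    Integrable (fun x => √((P.rnDeriv μ x).toReal * (Q.rnDeriv μ x).toReal)) μ := by
  refine ((Measure.integrable_toReal_rnDeriv (μ := P) (ν := μ)).add
    (Measure.integrable_toReal_rnDeriv (μ := Q))).mono'
    ((Measure.measurable_rnDeriv P μ).ennreal_toReal.mul
      (Measure.measurable_rnDeriv Q μ).ennreal_toReal).sqrt.aestronglyMeasurable
    (.of_forall fun x => ?_)
  have hp : 0 ≤ (P.rnDeriv μ x).toReal := ENNReal.toReal_nonneg
  have hq : 0 ≤ (Q.rnDeriv μ x).toReal := ENNReal.toReal_nonneg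
  rw [Real.norm_of_nonneg (Real.sqrt_nonneg _), Pi.add_apply]
  exact Real.sqrt_le_iff.2 ⟨by positivity, by nlinarith⟩

lemma hellingerAffinity_eq_of_absolutelyContinuous {P Q μ ν : Measure α} [SigmaFinite P]
    [SigmaFinite Q] [SigmaFinite μ] [SigmaFinite ν] (hνμ : ν ≪ μ) (hP : P ≪ ν) (hQ : Q ≪ ν) :
    hellingerAffinity P Q μ = hellingerAffinity P Q ν := by
  rw [hellingerAffinity, hellingerAffinity, ← integral_rnDeriv_smul hνμ]
  refine integral_congr_ae ?_
  filter_upwards [Measure.rnDeriv_mul_rnDeriv hP (κ := μ),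
    Measure.rnDeriv_mul_rnDeriv hQ (κ := μ)] with x hPx hQx
  rw [← hPx, ← hQx, Pi.mul_apply, Pi.mul_apply, ENNReal.toReal_mul, ENNReal.toReal_mul,
    smul_eq_mul, mul_mul_mul_comm, Real.sqrt_mul' _ (mul_self_nonneg _),
    Real.sqrt_mul_self ENNReal.toReal_nonneg, mul_comm]

lemma hellingerAffinity_smul_right (P Q μ : Measure α) [SigmaFinite Q] [SigmaFinite μ]
    {c : ENNReal} (hc : c ≠ ⊤) :
    hellingerAffinity P (c • Q) μ = √c.toReal * hellingerAffinity P Q μ := by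
  rw [hellingerAffinity, hellingerAffinity, ← integral_const_mul]
  refine integral_congr_ae ?_
  filter_upwards [Measure.rnDeriv_smul_left_of_ne_top' Q μ hc] with x hx
  rw [hx, Pi.smul_apply, smul_eq_mul, ENNReal.toReal_mul, mul_left_comm,
    Real.sqrt_mul ENNReal.toReal_nonneg]

lemma hellingerAffinity_add_right_of_mutuallySingular {P Q R : Measure α} (μ : Measure α)
    [IsFiniteMeasure Q] [IsFiniteMeasure R] [SigmaFinite μ] (hR : R ⟂ₘ P) :
    hellingerAffinity P (Q + R) μ = hellingerAffinity P Q μ := by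
  refine integral_congr_ae ?_
  filter_upwards [Measure.rnDeriv_add Q R μ, Measure.rnDeriv_ne_top Q μ,
    Measure.rnDeriv_ne_top R μ, hR.ae_rnDeriv_eq_zero_or_rnDeriv_eq_zero μ]
    with x hadd hQ hR hRP
  rw [hadd, Pi.add_apply, ENNReal.toReal_add hQ hR]
  rcases hRP with hRx | hPx
  · simp [hRx]
  · simp [hPx]

lemma sqHellinger_nonneg (P Q : Measure α) : 0 ≤ sqHellinger P Q :=
  integral_nonneg fun _ => sq_nonneg _

lemma sqHellinger_eq_sub_hellingerAffinity (P Q : Measure α) [IsFiniteMeasure P]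
    [IsFiniteMeasure Q] :
    sqHellinger P Q = P.real .univ + Q.real .univ - 2 * hellingerAffinity P Q (P + Q) := by
  have hP : P ≪ P + Q := Measure.AbsolutelyContinuous.rfl.add_right Q
  have hQ : Q ≪ P + Q := Measure.AbsolutelyContinuous.rfl.add_right' P
  have hPi := Measure.integrable_toReal_rnDeriv (μ := P) (ν := P + Q)
  have hQi := Measure.integrable_toReal_rnDeriv (μ := Q) (ν := P + Q)
  have hsum : Integrable (fun x => (P.rnDeriv (P + Q) x).toReal + (Q.rnDeriv (P + Q) x).toReal)
      (P + Q) := hPi.add hQi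
  have expand : ∀ p q : ℝ, 0 ≤ p → 0 ≤ q → (√p - √q) ^ 2 = p + q - 2 * √(p * q) := by
    intro p q hp hq
    rw [Real.sqrt_mul hp]
    nlinarith [Real.sq_sqrt hp, Real.sq_sqrt hq]
  simp_rw [sqHellinger, expand _ _ ENNReal.toReal_nonneg ENNReal.toReal_nonneg]
  rw [integral_sub hsum ((integrable_sqrt_mul_rnDeriv P Q _).const_mul 2),
    integral_add hPi hQi, integral_const_mul, Measure.integral_toReal_rnDeriv hP,
    Measure.integral_toReal_rnDeriv hQ, hellingerAffinity]

lemma sqHellinger_eq_sub_hellingerAffinity_of_absolutelyContinuous {P Q μ : Measure α}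
    [IsFiniteMeasure P] [IsFiniteMeasure Q] [SigmaFinite μ] (hP : P ≪ μ) (hQ : Q ≪ μ) :
    sqHellinger P Q = P.real .univ + Q.real .univ - 2 * hellingerAffinity P Q μ := by
  rw [sqHellinger_eq_sub_hellingerAffinity, hellingerAffinity_eq_of_absolutelyContinuous
    (Measure.AbsolutelyContinuous.add_left hP hQ) (Measure.AbsolutelyContinuous.rfl.add_right Q)
    (Measure.AbsolutelyContinuous.rfl.add_right' P)]

lemma sqHellinger_le_two (P Q : Measure α) [IsProbabilityMeasure P] [IsProbabilityMeasure Q] :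
    sqHellinger P Q ≤ 2 := by
  rw [sqHellinger_eq_sub_hellingerAffinity, probReal_univ, probReal_univ]
  linarith [hellingerAffinity_nonneg P Q (P + Q)]

lemma isProbabilityMeasure_ofReal_one_sub_smul_add (μ ν : Measure α)
    [IsProbabilityMeasure μ] [IsProbabilityMeasure ν] {ε : ℝ} (hε0 : 0 ≤ ε) (hε1 : ε ≤ 1) :
    IsProbabilityMeasure (ENNReal.ofReal (1 - ε) • μ + ENNReal.ofReal ε • ν) :=
  ⟨by simp [← ENNReal.ofReal_add (sub_nonneg.2 hε1) hε0]⟩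

lemma sqHellinger_mixture_of_mutuallySingular (P Q₀ Q₁ : Measure α)
    [IsProbabilityMeasure P] [IsProbabilityMeasure Q₀] [IsProbabilityMeasure Q₁]
    (hsing : Q₁ ⟂ₘ P) {ε : ℝ} (hε0 : 0 ≤ ε) (hε1 : ε ≤ 1) :
    sqHellinger P (ENNReal.ofReal (1 - ε) • Q₀ + ENNReal.ofReal ε • Q₁)
      = 2 * (1 - √(1 - ε)) + √(1 - ε) * sqHellinger P Q₀ := by
  have := isProbabilityMeasure_ofReal_one_sub_smul_add Q₀ Q₁ hε0 hε1
  have := Q₀.smul_finite (ENNReal.ofReal_ne_top (r := 1 - ε))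
  have := Q₁.smul_finite (ENNReal.ofReal_ne_top (r := ε))
  set μ := P + Q₀ + Q₁
  have hPμ : P ≪ μ := (Measure.AbsolutelyContinuous.rfl.add_right Q₀).add_right Q₁
  have hQ₀μ : Q₀ ≪ μ := (Measure.AbsolutelyContinuous.rfl.add_right' P).add_right Q₁
  have hQ₁μ : Q₁ ≪ μ := Measure.AbsolutelyContinuous.rfl.add_right' _
  have hA : hellingerAffinity P (ENNReal.ofReal (1 - ε) • Q₀ + ENNReal.ofReal ε • Q₁) μ
      = √(1 - ε) * hellingerAffinity P Q₀ μ := by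
    rw [hellingerAffinity_add_right_of_mutuallySingular μ (hsing.smul _),
      hellingerAffinity_smul_right P Q₀ μ ENNReal.ofReal_ne_top,
      ENNReal.toReal_ofReal (sub_nonneg.2 hε1)]
  rw [sqHellinger_eq_sub_hellingerAffinity_of_absolutelyContinuous hPμ
      ((hQ₀μ.smul_left _).add_left (hQ₁μ.smul_left _)),
    sqHellinger_eq_sub_hellingerAffinity_of_absolutelyContinuous hPμ hQ₀μ, hA,
    probReal_univ, probReal_univ, probReal_univ]
  ring

end MeasureTheory

lemma Real.half_le_one_sub_sqrt_one_sub {ε : ℝ} (hε : ε ≤ 2) : ε / 2 ≤ 1 - √(1 - ε) := by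
  have : √(1 - ε) ≤ 1 - ε / 2 := Real.sqrt_le_iff.2 ⟨by linarith, by nlinarith [sq_nonneg ε]⟩
  linarith

lemma Real.one_sub_sqrt_one_sub_le {ε : ℝ} (hε : 0 ≤ ε) : 1 - √(1 - ε) ≤ ε := by
  rcases le_total (1 - ε) 0 with h | h
  · linarith [Real.sqrt_nonneg (1 - ε)]
  · have : 1 - ε ≤ √(1 - ε) := Real.le_sqrt_of_sq_le (by nlinarith)
    linarith

/-- If `Q₁ ⟂ P` and `0 ≤ ε ≤ 1`, then
`(1/4)·max(ε, H²(P,Q₀)) ≤ H²(P, (1−ε)Q₀ + εQ₁) ≤ 4·max(ε, H²(P,Q₀))`. -/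
theorem stmt7 {α : Type*} [MeasurableSpace α] (P Q₀ Q₁ : Measure α)
    [IsProbabilityMeasure P] [IsProbabilityMeasure Q₀] [IsProbabilityMeasure Q₁]
    (hsing : Q₁ ⟂ₘ P) (ε : ℝ) (hε0 : 0 ≤ ε) (hε1 : ε ≤ 1) :
    (1 / 4) * max ε (sqHellinger P Q₀)
        ≤ sqHellinger P (ENNReal.ofReal (1 - ε) • Q₀ + ENNReal.ofReal ε • Q₁) ∧
    sqHellinger P (ENNReal.ofReal (1 - ε) • Q₀ + ENNReal.ofReal ε • Q₁)
        ≤ 4 * max ε (sqHellinger P Q₀) := by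
  rw [sqHellinger_mixture_of_mutuallySingular P Q₀ Q₁ hsing hε0 hε1]
  have hH₀ := sqHellinger_nonneg P Q₀
  have hH₂ := sqHellinger_le_two P Q₀
  have hlower := Real.half_le_one_sub_sqrt_one_sub (ε := ε) (by linarith)
  have hupper := Real.one_sub_sqrt_one_sub_le hε0
  have hs : 0 ≤ √(1 - ε) := Real.sqrt_nonneg _
  set s := √(1 - ε)
  set H := sqHellinger P Q₀
  have hmax : max ε H ≤ 2 * (1 - s) + s * H := max_le (by nlinarith) (by nlinarith)
  constructor
  · linarith [le_max_left ε H]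
  · nlinarith [le_max_left ε H, le_max_right ε H]
end

section
/- For any random variable X with distribution P on ℝ and any u ∈ ℝ, sup over the essential support of P of the function x ↦ (−x² + 2ux − u² + (u²∧1)/2), maximized over u ∈ ℝ, equals β*_IDJ(‖X‖_∞²) − 1/2, where β*_IDJ(r) = 1/2 + r for 0 < r ≤ 1/4 and 1 − (1−√r)₊² for r > 1/4; equivalently, ess sup_X sup_{u∈ℝ} {−X² + 2uX − u² + (u²∧1)/2} = β*_IDJ(ess sup X²) − 1/2. -/
/-!
Writing the integrand as `-(x - u)² + (u² ∧ 1)/2`, its supremum over `u` is `β*_IDJ(x²) - 1/2`,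
attained at `u = 2x`, `u = x/|x|` or `u = x` according as `|x| ≤ 1/2`, `1/2 < |x| < 1` or
`1 ≤ |x|`. The map `r ↦ β*_IDJ(r ⊔ 0)` is monotone and continuous on `EReal`, so it commutes
with the essential supremum (a `limsup` along `ae P`).
-/

open MeasureTheory

/-- The Ingster–Donoho–Jin detection boundary `β*_IDJ`, extended to `EReal` arguments
(with value `1` at `+∞`): `β*_IDJ(r) = 1/2 + r` for `r ≤ 1/4` and `1 − (1−√r)₊²` for
`r > 1/4`. -/
noncomputable def betaIDJ (r : EReal) : ℝ :=
  if r = ⊤ then 1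
  else if r.toReal ≤ 1 / 4 then 1 / 2 + r.toReal
  else 1 - (max (1 - Real.sqrt r.toReal) 0) ^ 2

open Set

lemma betaIDJ_coe (t : ℝ) :
    betaIDJ t = if t ≤ 1 / 4 then 1 / 2 + t else 1 - (max (1 - √t) 0) ^ 2 := by
  simp [betaIDJ]

lemma betaIDJ_top : betaIDJ ⊤ = 1 := by simp [betaIDJ]

lemma betaIDJ_le_one (r : EReal) : betaIDJ r ≤ 1 := by
  unfold betaIDJ
  split_ifs with h₁ h₂
  · rfl
  · linarith
  · nlinarith [sq_nonneg (max (1 - √r.toReal) 0)]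

lemma betaIDJ_eq_one_of_one_le {r : EReal} (hr : 1 ≤ r) : betaIDJ r = 1 := by
  induction r using EReal.rec with
  | bot => exact absurd hr (not_le.2 (EReal.bot_lt_coe 1))
  | top => exact betaIDJ_top
  | coe t =>
    have ht : 1 ≤ t := EReal.coe_le_coe_iff.1 hr
    have : 1 ≤ √t := Real.one_le_sqrt.2 ht
    rw [betaIDJ_coe, if_neg (by linarith), max_eq_right (by linarith)]
    norm_num

lemma betaIDJ_sq_sub_half (x : ℝ) :
    betaIDJ ↑(x ^ 2) - 1 / 2 = if |x| ≤ 1 / 2 then x ^ 2 else 1 / 2 - (max (1 - |x|) 0) ^ 2 := by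
  have hiff : x ^ 2 ≤ 1 / 4 ↔ |x| ≤ 1 / 2 := by
    rw [show (1 / 4 : ℝ) = (1 / 2) ^ 2 by norm_num, sq_le_sq,
      abs_of_pos (by norm_num : (0 : ℝ) < 1 / 2)]
  rw [betaIDJ_coe, Real.sqrt_sq_eq_abs]
  simp only [hiff]
  split_ifs <;> ring

lemma neg_sq_add_two_mul_sub_sq_add_min_le (x u : ℝ) :
    -(x ^ 2) + 2 * u * x - u ^ 2 + min (u ^ 2) 1 / 2 ≤ betaIDJ ↑(x ^ 2) - 1 / 2 := by
  rw [betaIDJ_sq_sub_half]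
  have hmin := min_le_left (u ^ 2) 1
  have hmin' := min_le_right (u ^ 2) 1
  split_ifs with hx
  · nlinarith [sq_nonneg (2 * x - u)]
  have hux : u * x ≤ |u| * |x| := by rw [← abs_mul]; exact le_abs_self _
  rcases le_total 1 |x| with hx1 | hx1
  · rw [max_eq_right (by linarith)]
    nlinarith [sq_nonneg (x - u)]
  rw [max_eq_left (by linarith)]
  rcases le_total |u| 1 with hu1 | hu1
  · have : min (u ^ 2) 1 = u ^ 2 := min_eq_left (by nlinarith [sq_abs u, abs_nonneg u])
    nlinarith [sq_abs u, sq_abs x,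
      mul_nonneg (sub_nonneg.2 hu1) (by linarith : 0 ≤ 4 * |x| - 1 - |u|)]
  · have : min (u ^ 2) 1 = 1 := min_eq_right (by nlinarith [sq_abs u])
    nlinarith [sq_abs u, sq_abs x,
      mul_nonneg (sub_nonneg.2 hu1) (by linarith : 0 ≤ |u| + 1 - 2 * |x|)]

lemma exists_neg_sq_add_two_mul_sub_sq_add_min_eq (x : ℝ) :
    ∃ u : ℝ, -(x ^ 2) + 2 * u * x - u ^ 2 + min (u ^ 2) 1 / 2 = betaIDJ ↑(x ^ 2) - 1 / 2 := by
  rw [betaIDJ_sq_sub_half]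
  split_ifs with hx
  · refine ⟨2 * x, ?_⟩
    rw [min_eq_left (by nlinarith [sq_abs x, abs_nonneg x])]
    ring
  rcases le_total 1 |x| with hx1 | hx1
  · refine ⟨x, ?_⟩
    rw [max_eq_right (by linarith), min_eq_right (by nlinarith [sq_abs x])]
    ring
  · have hx0 : |x| ≠ 0 := by linarith
    refine ⟨x / |x|, ?_⟩
    have hu : (x / |x|) ^ 2 = 1 := by rw [div_pow, sq_abs, div_self (by simpa using hx0)]
    rw [hu, min_self, max_eq_left (by linarith)]
    field_simp
    rw [← sq_abs x]
    ring

lemma ciSup_neg_sq_add_two_mul_sub_sq_add_min (x : ℝ) :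
    ⨆ u : ℝ, (-(x ^ 2) + 2 * u * x - u ^ 2 + min (u ^ 2) 1 / 2) = betaIDJ ↑(x ^ 2) - 1 / 2 := by
  obtain ⟨u₀, hu₀⟩ := exists_neg_sq_add_two_mul_sub_sq_add_min_eq x
  exact le_antisymm (ciSup_le (neg_sq_add_two_mul_sub_sq_add_min_le x))
    (hu₀ ▸ le_ciSup ⟨_, forall_mem_range.2 (neg_sq_add_two_mul_sub_sq_add_min_le x)⟩ u₀)

lemma monotone_betaIDJ_coe : Monotone fun t : ℝ => betaIDJ t := by
  intro s t hst
  simp only [betaIDJ_coe]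
  split_ifs with hs ht ht
  · linarith
  · have : 1 / 2 < √t := by
      rw [Real.lt_sqrt (by norm_num)]
      linarith
    have := max_lt (by linarith : 1 - √t < 1 / 2) (by norm_num : (0:ℝ) < 1 / 2)
    nlinarith [le_max_right (1 - √t) 0]
  · linarith
  · have : √s ≤ √t := Real.sqrt_le_sqrt hst
    have := max_le_max (by linarith : 1 - √t ≤ 1 - √s) (le_refl (0:ℝ))
    nlinarith [le_max_right (1 - √t) 0]

lemma monotoneOn_betaIDJ : MonotoneOn betaIDJ (Ici 0) := by
  intro a ha b hb hab
  induction b using EReal.rec with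
  | bot => exact absurd hb (by simp)
  | top => exact betaIDJ_top ▸ betaIDJ_le_one a
  | coe t =>
    induction a using EReal.rec with
    | bot => exact absurd ha (by simp)
    | top => exact absurd hab (by simp)
    | coe s => exact monotone_betaIDJ_coe (EReal.coe_le_coe_iff.1 hab)

/- Since `(⊥ : EReal).toReal = 0`, `betaIDJ ⊥ = 1 / 2`, so `betaIDJ` itself is not monotone:
clamping the argument at `0` repairs this. -/
lemma monotone_betaIDJ_max_zero : Monotone fun r : EReal => betaIDJ (max r 0) :=
  fun _ _ hab => monotoneOn_betaIDJ (mem_Ici.2 (le_max_right _ _)) (mem_Ici.2 (le_max_right _ _))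
    (max_le_max_right 0 hab)

lemma continuous_betaIDJ_coe : Continuous fun t : ℝ => betaIDJ t := by
  simp only [betaIDJ_coe]
  refine Continuous.if_le (by fun_prop) (by fun_prop) continuous_id continuous_const ?_
  rintro t rfl
  rw [show √(1 / 4 : ℝ) = 1 / 2 by rw [Real.sqrt_eq_iff_mul_self_eq] <;> norm_num]
  norm_num

lemma continuous_betaIDJ_max_zero : Continuous fun r : EReal => betaIDJ (max r 0) := by
  refine continuous_iff_continuousAt.2 fun r => ?_
  induction r using EReal.rec with
  | bot =>
    refine continuousAt_const.congr (f := fun _ => betaIDJ 0) ?_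
    filter_upwards [Iio_mem_nhds (EReal.bot_lt_coe 0)] with r hr
    rw [max_eq_right hr.le]
  | top =>
    refine continuousAt_const.congr (f := fun _ => 1) ?_
    filter_upwards [Ioi_mem_nhds (EReal.coe_lt_top 1)] with r hr
    have hr : (1 : EReal) ≤ r := le_of_lt hr
    rw [max_eq_left (zero_le_one.trans hr), betaIDJ_eq_one_of_one_le hr]
  | coe t =>
    refine EReal.isOpenEmbedding_coe.continuousAt_iff.1 ?_
    have hcomp : (fun r : EReal => betaIDJ (max r 0)) ∘ ((↑) : ℝ → EReal) =
        fun s => betaIDJ ((max s 0 : ℝ) : EReal) := by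
      funext s
      simp [EReal.coe_strictMono.monotone.map_max]
    rw [hcomp]
    exact (continuous_betaIDJ_coe.comp (continuous_id.max continuous_const)).continuousAt

/-- For any random variable `X` with distribution `P` on `ℝ`,
`ess sup_X sup_{u ∈ ℝ} {−X² + 2uX − u² + (u²∧1)/2} = β*_IDJ(ess sup X²) − 1/2`, where the
essential supremum is taken with respect to `P` (and `ess sup X²` is computed in `EReal`,
so that the unbounded case yields `β*_IDJ(+∞) = 1`). -/
theorem stmt19 (P : Measure ℝ) [IsProbabilityMeasure P] :
    essSup (fun x : ℝ => ⨆ u : ℝ, (-(x ^ 2) + 2 * u * x - u ^ 2 + min (u ^ 2) 1 / 2)) P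
      = betaIDJ (essSup (fun x : ℝ => ((x ^ 2 : ℝ) : EReal)) P) - 1 / 2 := by
  set sq : ℝ → EReal := fun x => ((x ^ 2 : ℝ) : EReal)
  have hsq : ∀ x, 0 ≤ sq x := fun x => EReal.coe_nonneg.2 (sq_nonneg x)
  have hS : 0 ≤ essSup sq P := (essSup_const' 0).symm.le.trans (essSup_mono_ae (.of_forall hsq))
  have hcomm := (monotone_betaIDJ_max_zero.add_const (-1 / 2 : ℝ)).map_limsup_of_continuousAt
    (F := ae P) sq (continuous_betaIDJ_max_zero.add continuous_const).continuousAt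
  calc essSup (fun x : ℝ => ⨆ u : ℝ, (-(x ^ 2) + 2 * u * x - u ^ 2 + min (u ^ 2) 1 / 2)) P
      = essSup ((fun r => betaIDJ (max r 0) + -1 / 2) ∘ sq) P := by
        congr 1
        funext x
        rw [ciSup_neg_sq_add_two_mul_sub_sq_add_min, Function.comp_apply, max_eq_left (hsq x)]
        ring
    _ = betaIDJ (max (essSup sq P) 0) + -1 / 2 := hcomm.symm
    _ = betaIDJ (essSup sq P) - 1 / 2 := by rw [max_eq_left hS]; ring
end
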